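/- arXiv:1408.6136 — 3 statements merged into one kernel-verified Lean document; each statement's English description precedes it below -/
import Mathlib

section
/- Let E and F be Banach spaces and φ: E → F a bounded linear map. If the dual map φ': F' → E' is an isometric isomorphism, then φ is an isometric isomorphism. -/
/-- If the dual map of a bounded linear map `φ` between Banach spaces is an isometric
isomorphism, then so is `φ`. -/
theorem stmt2 {E F : Type*} [NormedAddCommGroup E] [NormedSpace ℝ E] [CompleteSpace E]
    [NormedAddCommGroup F] [NormedSpace ℝ F] [CompleteSpace F]
    (φ : E →L[ℝ] F)
    (hbij : Function.Bijective (fun g : StrongDual ℝ F => g.comp φ))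
    (hiso : ∀ g : StrongDual ℝ F, ‖g.comp φ‖ = ‖g‖) :
    Function.Bijective φ ∧ ∀ x : E, ‖φ x‖ = ‖x‖ := by
  -- First, the isometry part.
  have hnorm : ∀ x : E, ‖φ x‖ = ‖x‖ := by
    intro x
    apply le_antisymm
    · -- ‖φ x‖ ≤ ‖x‖ : bound via all functionals g on F.
      apply NormedSpace.norm_le_dual_bound ℝ (φ x) (norm_nonneg x)
      intro g
      have h1 : g (φ x) = (g.comp φ) x := rfl
      calc ‖g (φ x)‖ = ‖(g.comp φ) x‖ := by rw [h1]
        _ ≤ ‖g.comp φ‖ * ‖x‖ := (g.comp φ).le_opNorm x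
        _ = ‖x‖ * ‖g‖ := by rw [hiso g]; ring
    · -- ‖x‖ ≤ ‖φ x‖ : every functional on E is of the form g ∘ φ.
      apply NormedSpace.norm_le_dual_bound ℝ x (norm_nonneg _)
      intro f
      obtain ⟨g, hg⟩ := hbij.surjective f
      have h1 : f x = g (φ x) := by rw [← hg]; rfl
      calc ‖f x‖ = ‖g (φ x)‖ := by rw [h1]
        _ ≤ ‖g‖ * ‖φ x‖ := g.le_opNorm _
        _ = ‖f‖ * ‖φ x‖ := by rw [← hg, hiso g]
        _ = ‖φ x‖ * ‖f‖ := by ring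
  refine ⟨⟨?_, ?_⟩, hnorm⟩
  · -- injectivity
    intro x y hxy
    have : ‖φ (x - y)‖ = 0 := by rw [map_sub, hxy, sub_self, norm_zero]
    rw [hnorm] at this
    exact sub_eq_zero.1 (norm_eq_zero.1 this)
  · -- surjectivity
    -- the range of φ is a closed subspace
    let ψ : E →ₗᵢ[ℝ] F := ⟨φ.toLinearMap, hnorm⟩
    have hclosed : IsClosed (Set.range φ) := by
      have := ψ.isometry.isClosedEmbedding.isClosed_range
      exact this
    intro y
    by_contra hy
    have hy' : y ∉ (LinearMap.range φ.toLinearMap : Set F) := by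
      intro h
      exact hy (by simpa using h)
    have hconv : Convex ℝ (LinearMap.range φ.toLinearMap : Set F) :=
      (LinearMap.range φ.toLinearMap).convex
    have hcl : IsClosed (LinearMap.range φ.toLinearMap : Set F) := by
      have : (LinearMap.range φ.toLinearMap : Set F) = Set.range φ := by
        ext z; simp [LinearMap.mem_range]
      rw [this]; exact hclosed
    obtain ⟨f, u, hfs, hfy⟩ := geometric_hahn_banach_closed_point hconv hcl hy'
    -- f vanishes on the range
    have hf0 : ∀ x : E, f (φ x) = 0 := by
      intro x
      by_contra h
      -- scale to exceed u
      have hmem : ∀ t : ℝ, (t / f (φ x)) • φ x ∈ (LinearMap.range φ.toLinearMap : Set F) :=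
        fun t => ⟨(t / f (φ x)) • x, by simp⟩
      have := hfs _ (hmem (u + 1))
      rw [map_smul, smul_eq_mul, div_mul_cancel₀ _ h] at this
      linarith
    have hfφ : f.comp φ = 0 := by ext x; exact hf0 x
    have h0 : f = 0 := by
      apply hbij.injective
      show f.comp φ = (0 : StrongDual ℝ F).comp φ
      rw [hfφ]; ext x; simp
    have hf0' : f 0 = 0 := by simp
    have h0mem : (0 : F) ∈ (LinearMap.range φ.toLinearMap : Set F) := ⟨0, by simp⟩
    have := hfs 0 h0mem
    rw [h0] at hfy
    simp at hfy
    linarith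
end

section
/- Let p ∈ [1,∞), and let (A_μ)_{μ∈Λ} be a directed system of Banach algebras with injective contractive connecting homomorphisms, with direct limit A. Suppose each A_μ is p-incompressible, i.e., every contractive injective homomorphism from A_μ into B(E), for E an L^p-space, is isometric. Then A is p-incompressible. -/
open scoped ENNReal

/-- A Banach space is an `L^p`-space if it is isometrically isomorphic to `L^p(X,μ)` for
some measure space `(X,μ)`. -/
def IsLpSpace (p : ℝ≥0∞) [Fact (1 ≤ p)] (E : Type*) [NormedAddCommGroup E] [NormedSpace ℂ E] : Prop :=
  ∃ (X : Type) (m : MeasurableSpace X) (μ : @MeasureTheory.Measure X m),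
    Nonempty (E ≃ₗᵢ[ℂ] MeasureTheory.Lp ℂ p μ)

/-- A Banach algebra `A` is `p`-incompressible if every contractive injective homomorphism
from `A` into `B(E)`, for `E` an `L^p`-space, is isometric. -/
def Incompressible (p : ℝ≥0∞) [Fact (1 ≤ p)] (A : Type*) [NonUnitalNormedRing A] [NormedSpace ℂ A] : Prop :=
  ∀ (E : Type) [NormedAddCommGroup E] [NormedSpace ℂ E], IsLpSpace p E →
    ∀ ρ : A →ₙₐ[ℂ] (E →L[ℂ] E), (∀ a : A, ‖ρ a‖ ≤ ‖a‖) → Function.Injective ρ →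
      ∀ a : A, ‖ρ a‖ = ‖a‖

/-- A direct limit of `p`-incompressible Banach algebras, with injective contractive
connecting maps, is `p`-incompressible. -/
theorem stmt10 (p : ℝ≥0∞) [Fact (1 ≤ p)] {ι : Type*} [Preorder ι] [IsDirected ι (· ≤ ·)]
    (A : ι → Type*) [∀ i, NonUnitalNormedRing (A i)] [∀ i, NormedSpace ℂ (A i)]
    (B : Type*) [NonUnitalNormedRing B] [NormedSpace ℂ B]
    (φ : ∀ ⦃i j : ι⦄, i ≤ j → (A i →ₙₐ[ℂ] A j))
    (hφinj : ∀ (i j : ι) (h : i ≤ j), Function.Injective (φ h))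
    (hφcontr : ∀ (i j : ι) (h : i ≤ j) (a : A i), ‖φ h a‖ ≤ ‖a‖)
    (ψ : ∀ i, A i →ₙₐ[ℂ] B)
    (hψcomp : ∀ (i j : ι) (h : i ≤ j), (ψ j).comp (φ h) = ψ i)
    (hψinj : ∀ i, Function.Injective (ψ i))
    (hψcontr : ∀ (i : ι) (a : A i), ‖ψ i a‖ ≤ ‖a‖)
    (hdense : Dense (⋃ i, Set.range (ψ i)))
    (hincompr : ∀ i, Incompressible p (A i)) :
    Incompressible p B := by
  intro E _ _ hE ρ hρc hρinj b
  have hlip : LipschitzWith 1 ρ := LipschitzWith.of_dist_le_mul fun x y => by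
    simpa [dist_eq_norm, ← map_sub] using hρc (x - y)
  have key : (⋃ i, Set.range (ψ i)) ⊆ {x : B | ‖ρ x‖ = ‖x‖} := by
    rintro x hx
    simp only [Set.mem_iUnion, Set.mem_range] at hx
    obtain ⟨i, a, rfl⟩ := hx
    have h1 : ‖(ρ.comp (ψ i)) a‖ = ‖a‖ :=
      hincompr i E hE (ρ.comp (ψ i)) (fun a => le_trans (hρc _) (hψcontr i a))
        (fun x y h => hψinj i (hρinj h)) a
    have h2 := hψcontr i a
    have h3 := hρc (ψ i a)
    simp only [NonUnitalAlgHom.comp_apply] at h1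
    have : ‖ρ (ψ i a)‖ = ‖ψ i a‖ := le_antisymm h3 (h1 ▸ h2)
    exact this
  have hcl : IsClosed {x : B | ‖ρ x‖ = ‖x‖} :=
    isClosed_eq hlip.continuous.norm continuous_norm
  have : closure (⋃ i, Set.range (ψ i)) ⊆ {x : B | ‖ρ x‖ = ‖x‖} :=
    hcl.closure_subset_iff.mpr key
  rw [hdense.closure_eq] at this
  exact this (Set.mem_univ b)
end

section
/- Let G be a discrete group, H a subgroup, E a Banach space, and ρ: H → Isom(E) an isometric representation. Define Ind_H^G(E) as the space of functions ω: G → E satisfying ρ(h)(ω(sh)) = ω(s) for all s ∈ G, h ∈ H, and such that sH ↦ ‖ω(s)‖ lies in ℓ^p(G/H), with norm ‖ω‖ = (Σ_{sH∈G/H} ‖ω(s)‖^p)^{1/p}. Then composing with any section σ: G/H → G gives an isometric isomorphism Ind_H^G(E) ≅ ℓ^p(G/H, E); in particular, if E is an L^p-space then so is Ind_H^G(E). -/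
open scoped ENNReal

/-- Composing with a section `σ : G/H → G` identifies the induced space `Ind_H^G(E)`
(covariant `E`-valued functions with `ℓ^p` coset norms) isometrically with `ℓ^p(G/H, E)`:
the coset norms do not depend on the chosen section, and the map is bijective. -/
theorem stmt15 {G : Type*} [Group G] (H : Subgroup G)
    {E : Type*} [NormedAddCommGroup E] [NormedSpace ℂ E]
    (p : ℝ≥0∞) (hp : 1 ≤ p)
    (ρ : H →* (E ≃ₗᵢ[ℂ] E))
    (σ σ' : G ⧸ H → G)
    (hσ : ∀ c : G ⧸ H, QuotientGroup.mk (σ c) = c)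
    (hσ' : ∀ c : G ⧸ H, QuotientGroup.mk (σ' c) = c) :
    (∀ ω : G → E, (∀ (s : G) (h : H), ρ h (ω (s * (h : G))) = ω s) →
        ∀ c : G ⧸ H, ‖ω (σ c)‖ = ‖ω (σ' c)‖) ∧
    Function.Bijective
      (fun ω : {ω : G → E // (∀ (s : G) (h : H), ρ h (ω (s * (h : G))) = ω s) ∧
          Memℓp (fun c : G ⧸ H => ω (σ c)) p} =>
        (⟨fun c : G ⧸ H => ω.1 (σ c), ω.2.2⟩ : lp (fun _ : G ⧸ H => E) p)) := by
  -- the coset representative correction element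
  have hmem : ∀ s : G, (σ (QuotientGroup.mk s))⁻¹ * s ∈ H := fun s =>
    QuotientGroup.eq.mp (hσ (QuotientGroup.mk s))
  -- general formula: any covariant ω is determined by its values on the section
  have key : ∀ ω : G → E, (∀ (s : G) (h : H), ρ h (ω (s * (h : G))) = ω s) →
      ∀ s : G, ω s = (ρ ⟨_, hmem s⟩).symm (ω (σ (QuotientGroup.mk s))) := by
    intro ω hω s
    have h1 := hω (σ (QuotientGroup.mk s)) ⟨_, hmem s⟩
    rw [mul_inv_cancel_left] at h1
    rw [← h1, LinearIsometryEquiv.symm_apply_apply]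
  constructor
  · intro ω hω c
    have hm : (σ c)⁻¹ * σ' c ∈ H := QuotientGroup.eq.mp ((hσ c).trans (hσ' c).symm)
    have h1 := hω (σ c) ⟨_, hm⟩
    rw [mul_inv_cancel_left] at h1
    rw [← h1, (ρ _).norm_map]
  constructor
  · -- injectivity
    rintro ⟨ω, hω, hm⟩ ⟨ω', hω', hm'⟩ hh
    have hfun : (fun c : G ⧸ H => ω (σ c)) = fun c : G ⧸ H => ω' (σ c) :=
      Subtype.ext_iff.mp hh
    ext s
    show ω s = ω' s
    rw [key ω hω s, key ω' hω' s, congrFun hfun]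
  · -- surjectivity
    intro f
    refine ⟨⟨fun s => (ρ ⟨_, hmem s⟩).symm (f (QuotientGroup.mk s)), ?_, ?_⟩, ?_⟩
    · intro s h
      have hq : QuotientGroup.mk (s * (h : G)) = (QuotientGroup.mk s : G ⧸ H) :=
        QuotientGroup.eq.mpr (by simp [H.inv_mem h.2])
      show ρ h ((ρ ⟨_, hmem (s * (h : G))⟩).symm (f (QuotientGroup.mk (s * (h : G)))))
          = (ρ ⟨_, hmem s⟩).symm (f (QuotientGroup.mk s))
      have hmul : (⟨(σ (QuotientGroup.mk (s * (h : G))))⁻¹ * (s * (h : G)),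
          hmem (s * (h : G))⟩ : H) = ⟨_, hmem s⟩ * h := by
        ext; simp [hq, mul_assoc]
      rw [hmul, hq, map_mul]
      apply (ρ ⟨_, hmem s⟩).injective
      have : (ρ ⟨_, hmem s⟩) ((ρ h) ((ρ ⟨_, hmem s⟩ * ρ h).symm (f (QuotientGroup.mk s))))
          = (ρ ⟨_, hmem s⟩ * ρ h) ((ρ ⟨_, hmem s⟩ * ρ h).symm (f (QuotientGroup.mk s))) := by
        rw [LinearIsometryEquiv.coe_mul]; rfl
      rw [this]; simp
    · -- Memℓp
      have : (fun c : G ⧸ H => (ρ ⟨_, hmem (σ c)⟩).symm (f (QuotientGroup.mk (σ c))))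
          = fun c : G ⧸ H => f c := by
        funext c
        have h1 : QuotientGroup.mk (σ c) = c := hσ c
        have h2 : (⟨(σ (QuotientGroup.mk (σ c)))⁻¹ * σ c, hmem (σ c)⟩ : H) = 1 := by
          ext; simp [h1]
        rw [h2, map_one, LinearIsometryEquiv.one_def, h1]
        rfl
      rw [this]
      exact lp.memℓp f
    · ext c
      have h1 : QuotientGroup.mk (σ c) = c := hσ c
      have h2 : (⟨(σ (QuotientGroup.mk (σ c)))⁻¹ * σ c, hmem (σ c)⟩ : H) = 1 := by
        ext; simp [h1]
      show (ρ ⟨_, hmem (σ c)⟩).symm (f (QuotientGroup.mk (σ c))) = f c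
      rw [h2, map_one, LinearIsometryEquiv.one_def, h1]
      rfl
end
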